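/- Let qᵀ denote the transposed matrix, (qᵀ)_{ij} = q_{ji}. There exists a unique k-algebra isomorphism φ₃ : 𝒰(q) → 𝒰(qᵀ) such that φ₃(K_i) = L_i, φ₃(L_i) = K_i, φ₃(E_i) = F_i, and φ₃(F_i) = E_i for all 1 ≤ i ≤ θ. -/

import Mathlib

/-- The generators `E_i, F_i, K_i, K_i⁻, L_i, L_i⁻` of the Drinfeld double `𝒰(q)`. -/
inductive UGen (θ : ℕ) : Type
  | E : Fin θ → UGen θ
  | F : Fin θ → UGen θ
  | K : Fin θ → UGen θ
  | Kinv : Fin θ → UGen θ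
  | L : Fin θ → UGen θ
  | Linv : Fin θ → UGen θ

/-- The toral generators, i.e. those among `K_i, K_i⁻, L_i, L_i⁻`. -/
def UGen.IsToral {θ : ℕ} : UGen θ → Prop
  | .E _ => False
  | .F _ => False
  | _ => True

variable (k : Type*) [Field k] {θ : ℕ}

/-- The image of a generator in the free algebra. -/
noncomputable def Ugen (g : UGen θ) : FreeAlgebra k (UGen θ) := FreeAlgebra.ι k g

/-- The defining relations of the algebra `𝒰(q)`. -/
inductive URel (q : Fin θ → Fin θ → kˣ) :
    FreeAlgebra k (UGen θ) → FreeAlgebra k (UGen θ) → Prop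
  | toral_comm (X Y : UGen θ) (hX : X.IsToral) (hY : Y.IsToral) :
      URel q (Ugen k X * Ugen k Y) (Ugen k Y * Ugen k X)
  | K_Kinv (i : Fin θ) : URel q (Ugen k (.K i) * Ugen k (.Kinv i)) 1
  | Kinv_K (i : Fin θ) : URel q (Ugen k (.Kinv i) * Ugen k (.K i)) 1
  | L_Linv (i : Fin θ) : URel q (Ugen k (.L i) * Ugen k (.Linv i)) 1
  | Linv_L (i : Fin θ) : URel q (Ugen k (.Linv i) * Ugen k (.L i)) 1
  | K_E (i j : Fin θ) : URel q (Ugen k (.K i) * Ugen k (.E j))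
      ((q i j : k) • (Ugen k (.E j) * Ugen k (.K i)))
  | L_E (i j : Fin θ) : URel q (Ugen k (.L i) * Ugen k (.E j))
      ((q j i : k)⁻¹ • (Ugen k (.E j) * Ugen k (.L i)))
  | K_F (i j : Fin θ) : URel q (Ugen k (.K i) * Ugen k (.F j))
      ((q i j : k)⁻¹ • (Ugen k (.F j) * Ugen k (.K i)))
  | L_F (i j : Fin θ) : URel q (Ugen k (.L i) * Ugen k (.F j))
      ((q j i : k) • (Ugen k (.F j) * Ugen k (.L i)))
  | E_F (i j : Fin θ) : URel q (Ugen k (.E i) * Ugen k (.F j) - Ugen k (.F j) * Ugen k (.E i))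
      (if i = j then Ugen k (.K i) - Ugen k (.L i) else 0)

/-- The algebra `𝒰(q)`: the quotient of the free algebra on the generators
`E_i, F_i, K_i, K_i⁻, L_i, L_i⁻` by the defining relations. -/
noncomputable abbrev UqAlgebra (q : Fin θ → Fin θ → kˣ) := RingQuot (URel k q)

variable (q : Fin θ → Fin θ → kˣ)

/-- The generator `E_i` of `𝒰(q)`. -/
noncomputable def UE (i : Fin θ) : UqAlgebra k q := RingQuot.mkAlgHom k (URel k q) (Ugen k (.E i))
/-- The generator `F_i` of `𝒰(q)`. -/
noncomputable def UF (i : Fin θ) : UqAlgebra k q := RingQuot.mkAlgHom k (URel k q) (Ugen k (.F i))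
/-- The generator `K_i` of `𝒰(q)`. -/
noncomputable def UK (i : Fin θ) : UqAlgebra k q := RingQuot.mkAlgHom k (URel k q) (Ugen k (.K i))
/-- The generator `K_i⁻` of `𝒰(q)`. -/
noncomputable def UKinv (i : Fin θ) : UqAlgebra k q :=
  RingQuot.mkAlgHom k (URel k q) (Ugen k (.Kinv i))
/-- The generator `L_i` of `𝒰(q)`. -/
noncomputable def UL (i : Fin θ) : UqAlgebra k q := RingQuot.mkAlgHom k (URel k q) (Ugen k (.L i))
/-- The generator `L_i⁻` of `𝒰(q)`. -/
noncomputable def ULinv (i : Fin θ) : UqAlgebra k q :=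
  RingQuot.mkAlgHom k (URel k q) (Ugen k (.Linv i))

/-!
The substitution `E ↔ F`, `K ↔ L`, `K⁻ ↔ L⁻` of generators carries each defining relation of
`𝒰(q)` to a defining relation of `𝒰(qᵀ)` (the commutator relation up to a sign), so it
induces an algebra map `𝒰(q) → 𝒰(qᵀ)`. The same construction for `qᵀ` gives an inverse, because
`(qᵀ)ᵀ = q` and the substitution is an involution. Uniqueness holds because `K`, `L`, `E`, `F`
generate `𝒰(q)`: the images of `K⁻` and `L⁻` are forced as inverses of those of `K` and `L`.
-/

@[simp]
def UGen.swap : UGen θ → UGen θ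
  | .E i => .F i
  | .F i => .E i
  | .K i => .L i
  | .L i => .K i
  | .Kinv i => .Linv i
  | .Linv i => .Kinv i

@[simp]
theorem UGen.swap_swap (g : UGen θ) : g.swap.swap = g := by
  cases g <;> rfl

theorem UGen.IsToral.swap {g : UGen θ} (h : g.IsToral) : g.swap.IsToral := by
  cases g <;> first | exact h.elim | trivial

section

variable {k}

theorem UK_mul_UKinv (i : Fin θ) : UK k q i * UKinv k q i = 1 := by
  simpa only [UK, UKinv, map_mul, map_one] using RingQuot.mkAlgHom_rel k (URel.K_Kinv (q := q) i)

theorem UKinv_mul_UK (i : Fin θ) : UKinv k q i * UK k q i = 1 := by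
  simpa only [UK, UKinv, map_mul, map_one] using RingQuot.mkAlgHom_rel k (URel.Kinv_K (q := q) i)

theorem UL_mul_ULinv (i : Fin θ) : UL k q i * ULinv k q i = 1 := by
  simpa only [UL, ULinv, map_mul, map_one] using RingQuot.mkAlgHom_rel k (URel.L_Linv (q := q) i)

theorem ULinv_mul_UL (i : Fin θ) : ULinv k q i * UL k q i = 1 := by
  simpa only [UL, ULinv, map_mul, map_one] using RingQuot.mkAlgHom_rel k (URel.Linv_L (q := q) i)

theorem UqAlgebra.algHom_ext {A : Type*} [Semiring A] [Algebra k A]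
    {f g : UqAlgebra k q →ₐ[k] A}
    (hK : ∀ i, f (UK k q i) = g (UK k q i)) (hL : ∀ i, f (UL k q i) = g (UL k q i))
    (hE : ∀ i, f (UE k q i) = g (UE k q i)) (hF : ∀ i, f (UF k q i) = g (UF k q i)) :
    f = g := by
  have inv_eq {x y : UqAlgebra k q} (hxy : x * y = 1) (hyx : y * x = 1) (hx : f x = g x) :
      f y = g y :=
    left_inv_eq_right_inv (by rw [← map_mul, hyx, map_one]) (by rw [hx, ← map_mul, hxy, map_one])
  apply RingQuot.ringQuot_ext'
  refine FreeAlgebra.hom_ext (funext fun gen => ?_)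
  cases gen with
  | E i => exact hE i
  | F i => exact hF i
  | K i => exact hK i
  | L i => exact hL i
  | Kinv i => exact inv_eq (UK_mul_UKinv q i) (UKinv_mul_UK q i) (hK i)
  | Linv i => exact inv_eq (UL_mul_ULinv q i) (ULinv_mul_UL q i) (hL i)

variable (k) in
noncomputable def swapHom : FreeAlgebra k (UGen θ) →ₐ[k] FreeAlgebra k (UGen θ) :=
  FreeAlgebra.lift k (Ugen k ∘ UGen.swap)

variable (k) in
@[simp]
theorem swapHom_Ugen (g : UGen θ) : swapHom k (Ugen k g) = Ugen k g.swap :=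
  FreeAlgebra.lift_ι_apply _ _

theorem URel.mkAlgHom_swapHom {a b : FreeAlgebra k (UGen θ)} (h : URel k q a b) :
    RingQuot.mkAlgHom k (URel k fun i j => q j i) (swapHom k a) =
      RingQuot.mkAlgHom k (URel k fun i j => q j i) (swapHom k b) := by
  induction h with
  | toral_comm X Y hX hY =>
    simpa using RingQuot.mkAlgHom_rel k
      (URel.toral_comm (q := fun i j => q j i) X.swap Y.swap hX.swap hY.swap)
  | K_Kinv i => simpa using RingQuot.mkAlgHom_rel k (URel.L_Linv (q := fun i j => q j i) i)
  | Kinv_K i => simpa using RingQuot.mkAlgHom_rel k (URel.Linv_L (q := fun i j => q j i) i)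
  | L_Linv i => simpa using RingQuot.mkAlgHom_rel k (URel.K_Kinv (q := fun i j => q j i) i)
  | Linv_L i => simpa using RingQuot.mkAlgHom_rel k (URel.Kinv_K (q := fun i j => q j i) i)
  | K_E i j => simpa using RingQuot.mkAlgHom_rel k (URel.L_F (q := fun i j => q j i) i j)
  | L_E i j => simpa using RingQuot.mkAlgHom_rel k (URel.K_F (q := fun i j => q j i) i j)
  | K_F i j => simpa using RingQuot.mkAlgHom_rel k (URel.L_E (q := fun i j => q j i) i j)
  | L_F i j => simpa using RingQuot.mkAlgHom_rel k (URel.K_E (q := fun i j => q j i) i j)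
  | E_F i j =>
    have h := congrArg Neg.neg (RingQuot.mkAlgHom_rel k (URel.E_F (q := fun i j => q j i) j i))
    rcases eq_or_ne i j with rfl | hij
    · simpa using h
    · simpa [hij, hij.symm] using h

noncomputable def phi3Hom : UqAlgebra k q →ₐ[k] UqAlgebra k (fun i j => q j i) :=
  RingQuot.liftAlgHom k
    ⟨(RingQuot.mkAlgHom k _).comp (swapHom k), fun ⦃_ _⦄ h => URel.mkAlgHom_swapHom q h⟩

theorem phi3Hom_mkAlgHom_Ugen (g : UGen θ) :
    phi3Hom q (RingQuot.mkAlgHom k (URel k q) (Ugen k g)) =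
      RingQuot.mkAlgHom k (URel k fun i j => q j i) (Ugen k g.swap) :=
  (RingQuot.liftAlgHom_mkAlgHom_apply k _ _ _).trans (congrArg _ (swapHom_Ugen k g))

theorem phi3Hom_comp_phi3Hom :
    (phi3Hom fun i j => q j i).comp (phi3Hom q) = AlgHom.id k (UqAlgebra k q) := by
  refine RingQuot.ringQuot_ext' k _ _ (FreeAlgebra.hom_ext (funext fun g => ?_))
  change phi3Hom _ (phi3Hom q (RingQuot.mkAlgHom k _ (Ugen k g))) =
    RingQuot.mkAlgHom k (URel k q) (Ugen k g)
  rw [phi3Hom_mkAlgHom_Ugen, phi3Hom_mkAlgHom_Ugen, UGen.swap_swap]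

noncomputable def phi3Equiv : UqAlgebra k q ≃ₐ[k] UqAlgebra k (fun i j => q j i) :=
  AlgEquiv.ofAlgHom (phi3Hom q) (phi3Hom fun i j => q j i)
    (phi3Hom_comp_phi3Hom fun i j => q j i) (phi3Hom_comp_phi3Hom q)

end

/-- There is a unique algebra isomorphism `φ₃ : 𝒰(q) → 𝒰(qᵀ)` with `φ₃(K_i) = L_i`,
`φ₃(L_i) = K_i`, `φ₃(E_i) = F_i` and `φ₃(F_i) = E_i`, where `(qᵀ)_{ij} = q_{ji}`. -/
theorem UqAlgebra_phi3 :
    ∃! φ : UqAlgebra k q ≃ₐ[k] UqAlgebra k (fun i j => q j i),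
      ∀ i : Fin θ,
        φ (UK k q i) = UL k (fun i j => q j i) i ∧
        φ (UL k q i) = UK k (fun i j => q j i) i ∧
        φ (UE k q i) = UF k (fun i j => q j i) i ∧
        φ (UF k q i) = UE k (fun i j => q j i) i := by
  refine ⟨phi3Equiv q, fun i => ⟨phi3Hom_mkAlgHom_Ugen q (.K i),
    phi3Hom_mkAlgHom_Ugen q (.L i), phi3Hom_mkAlgHom_Ugen q (.E i),
    phi3Hom_mkAlgHom_Ugen q (.F i)⟩, fun φ hφ => ?_⟩
  refine AlgEquiv.coe_toAlgHom_injective (UqAlgebra.algHom_ext q ?_ ?_ ?_ ?_) <;> intro i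
  · exact (hφ i).1.trans (phi3Hom_mkAlgHom_Ugen q (.K i)).symm
  · exact (hφ i).2.1.trans (phi3Hom_mkAlgHom_Ugen q (.L i)).symm
  · exact (hφ i).2.2.1.trans (phi3Hom_mkAlgHom_Ugen q (.E i)).symm
  · exact (hφ i).2.2.2.trans (phi3Hom_mkAlgHom_Ugen q (.F i)).symm
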